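/- arXiv:1808.03342 — 2 statements merged into one kernel-verified Lean document; each statement's English description precedes it below -/
import Mathlib

section
/- Let λ > 0 and suppose a continuous function φ on an arc β of length |β| satisfies: (1) |∫_β φ ds| ≤ C₁ λ^{−1/2} (log λ)^{1/4}, (2) ∫_β φ² ds ≥ c₂ > 0, and (3) sup_β |φ| ≤ C₃ λ^{1/2}/(log λ)^{1/2}. Then for λ sufficiently large (depending on C₁, c₂, C₃), φ changes sign on β; in particular ∫_β |φ| ds ≥ c₂ C₃^{−1} λ^{−1/2} (log λ)^{1/2} > |∫_β φ ds|. -/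
/-!
Since `φ² ≤ (sup |φ|) |φ|`, the `L²` lower bound and the sup bound give
`∫ |φ| ≥ c₂ / sup |φ| ≳ λ^{-1/2} (log λ)^{1/2}`, which eventually beats the bound
`λ^{-1/2} (log λ)^{1/4}` on `|∫ φ|`. A function of constant sign has `∫ |φ| = |∫ φ|`,
so `φ` must take both signs.
-/

open Real Set Filter

section SignChange

variable {φ : ℝ → ℝ} {a b : ℝ}

lemma integral_abs_le_abs_integral_of_nonneg_on (hab : a ≤ b)
    (h : ∀ s ∈ Icc a b, 0 ≤ φ s) :
    ∫ s in a..b, |φ s| ≤ |∫ s in a..b, φ s| := by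
  have habs : EqOn (fun s => |φ s|) φ (uIcc a b) := fun s hs =>
    abs_of_nonneg (h s (uIcc_of_le hab ▸ hs))
  rw [intervalIntegral.integral_congr habs]
  exact le_abs_self _

lemma integral_abs_le_abs_integral_of_nonpos_on (hab : a ≤ b)
    (h : ∀ s ∈ Icc a b, φ s ≤ 0) :
    ∫ s in a..b, |φ s| ≤ |∫ s in a..b, φ s| := by
  have := integral_abs_le_abs_integral_of_nonneg_on (φ := fun s => -φ s) hab
    fun s hs => neg_nonneg.2 (h s hs)
  simpa only [abs_neg, intervalIntegral.integral_neg] using this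

lemma exists_pos_and_neg_of_abs_integral_lt_integral_abs (hab : a ≤ b)
    (h : |∫ s in a..b, φ s| < ∫ s in a..b, |φ s|) :
    ∃ p ∈ Icc a b, ∃ q ∈ Icc a b, 0 < φ p ∧ φ q < 0 := by
  by_contra! hsign
  refine h.not_ge ?_
  by_cases hpos : ∃ p ∈ Icc a b, 0 < φ p
  · obtain ⟨p, hp, hφp⟩ := hpos
    exact integral_abs_le_abs_integral_of_nonneg_on hab fun q hq => hsign p hp q hq hφp
  · push Not at hpos
    exact integral_abs_le_abs_integral_of_nonpos_on hab hpos

end SignChange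

lemma integral_sq_le_mul_integral_abs {φ : ℝ → ℝ} {a b M : ℝ} (hab : a ≤ b)
    (hφ : ContinuousOn φ (Icc a b)) (hM : ∀ s ∈ Icc a b, |φ s| ≤ M) :
    ∫ s in a..b, φ s ^ 2 ≤ M * ∫ s in a..b, |φ s| := by
  rw [← uIcc_of_le hab] at hφ
  rw [← intervalIntegral.integral_const_mul]
  refine intervalIntegral.integral_mono_on hab (hφ.pow 2).intervalIntegrable
    (hφ.abs.intervalIntegrable.const_mul M) fun s hs => ?_
  rw [← sq_abs, sq]
  exact mul_le_mul_of_nonneg_right (hM s hs) (abs_nonneg _)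

lemma mul_rpow_quarter_lt_mul_rpow_half {C c ℓ : ℝ} (hℓ : 0 < ℓ)
    (h : C < c * ℓ ^ ((1:ℝ)/4)) : C * ℓ ^ ((1:ℝ)/4) < c * ℓ ^ ((1:ℝ)/2) := by
  have hhalf : ℓ ^ ((1:ℝ)/2) = ℓ ^ ((1:ℝ)/4) * ℓ ^ ((1:ℝ)/4) := by
    rw [← rpow_add hℓ]; norm_num
  rw [hhalf, ← mul_assoc]
  exact mul_lt_mul_of_pos_right h (rpow_pos_of_pos hℓ _)

theorem stmt_5_general (C₁ c₂ C₃ : ℝ) (hc₂ : 0 < c₂) (hC₃ : 0 < C₃) :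
    ∃ Λ : ℝ, ∀ lam : ℝ, Λ ≤ lam → ∀ (L : ℝ) (φ : ℝ → ℝ), 0 < L →
      ContinuousOn φ (Set.Icc 0 L) →
      |∫ s in (0:ℝ)..L, φ s| ≤ C₁ * lam ^ (-(1:ℝ)/2) * Real.log lam ^ ((1:ℝ)/4) →
      c₂ ≤ ∫ s in (0:ℝ)..L, (φ s) ^ 2 →
      (∀ s ∈ Set.Icc (0:ℝ) L, |φ s| ≤ C₃ * lam ^ ((1:ℝ)/2) / Real.log lam ^ ((1:ℝ)/2)) →
      (c₂ * C₃⁻¹ * lam ^ (-(1:ℝ)/2) * Real.log lam ^ ((1:ℝ)/2)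
          ≤ ∫ s in (0:ℝ)..L, |φ s|) ∧
      |∫ s in (0:ℝ)..L, φ s|
          < c₂ * C₃⁻¹ * lam ^ (-(1:ℝ)/2) * Real.log lam ^ ((1:ℝ)/2) ∧
      ∃ p ∈ Set.Icc (0:ℝ) L, ∃ q ∈ Set.Icc (0:ℝ) L, 0 < φ p ∧ φ q < 0 := by
  have hquarter : Tendsto (fun lam => log lam ^ ((1:ℝ)/4)) atTop atTop :=
    (tendsto_rpow_atTop (by norm_num)).comp tendsto_log_atTop
  obtain ⟨Λ, hΛ⟩ := eventually_atTop.1 <| (eventually_gt_atTop 1).and <|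
    hquarter.eventually_gt_atTop (C₁ / (c₂ * C₃⁻¹))
  refine ⟨Λ, fun lam hΛlam L φ hL hφ hperiod hmass hsup => ?_⟩
  obtain ⟨hlam, hlarge⟩ := hΛ lam hΛlam
  have hlog : 0 < log lam := log_pos hlam
  have hrpow_neg_half : lam ^ (-(1:ℝ)/2) = (lam ^ ((1:ℝ)/2))⁻¹ := by
    rw [neg_div, rpow_neg (by linarith)]
  have hlower :
      c₂ * C₃⁻¹ * lam ^ (-(1:ℝ)/2) * log lam ^ ((1:ℝ)/2)
        ≤ ∫ s in (0:ℝ)..L, |φ s| := by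
    have hM : 0 < C₃ * lam ^ ((1:ℝ)/2) / log lam ^ ((1:ℝ)/2) := by positivity
    have := hmass.trans (integral_sq_le_mul_integral_abs hL.le hφ hsup)
    rw [← div_le_iff₀' hM] at this
    refine le_of_eq_of_le ?_ this
    rw [hrpow_neg_half]; field_simp
  have hupper :
      |∫ s in (0:ℝ)..L, φ s|
        < c₂ * C₃⁻¹ * lam ^ (-(1:ℝ)/2) * log lam ^ ((1:ℝ)/2) := by
    have hgain := mul_rpow_quarter_lt_mul_rpow_half hlog ((div_lt_iff₀' (by positivity)).1 hlarge)
    calc |∫ s in (0:ℝ)..L, φ s| ≤ lam ^ (-(1:ℝ)/2) * (C₁ * log lam ^ ((1:ℝ)/4)) :=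
          hperiod.trans_eq (by ring)
      _ < lam ^ (-(1:ℝ)/2) * (c₂ * C₃⁻¹ * log lam ^ ((1:ℝ)/2)) :=
          mul_lt_mul_of_pos_left hgain (rpow_pos_of_pos (by linarith) _)
      _ = _ := by ring
  exact ⟨hlower, hupper,
    exists_pos_and_neg_of_abs_integral_lt_integral_abs hL.le (hupper.trans_le hlower)⟩

/-- Quantitative Jung–Zelditch sign-change argument: if a continuous function
`φ` on an arc `β = [0,L]` has small period integral, `L²`-mass bounded below,
and sup norm `≤ C₃ λ^{1/2}/(log λ)^{1/2}`, then for `λ` large (depending only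
on the constants) `φ` changes sign on `β`, and moreover
`∫_β |φ| ≥ (c₂/C₃)·λ^{−1/2}(log λ)^{1/2} > |∫_β φ|`. -/
theorem stmt_5 (C₁ c₂ C₃ : ℝ) (hC₁ : 0 < C₁) (hc₂ : 0 < c₂) (hC₃ : 0 < C₃) :
    ∃ Λ : ℝ, ∀ lam : ℝ, Λ ≤ lam → ∀ (L : ℝ) (φ : ℝ → ℝ), 0 < L →
      ContinuousOn φ (Set.Icc 0 L) →
      |∫ s in (0:ℝ)..L, φ s| ≤ C₁ * lam ^ (-(1:ℝ)/2) * Real.log lam ^ ((1:ℝ)/4) →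
      c₂ ≤ ∫ s in (0:ℝ)..L, (φ s) ^ 2 →
      (∀ s ∈ Set.Icc (0:ℝ) L, |φ s| ≤ C₃ * lam ^ ((1:ℝ)/2) / Real.log lam ^ ((1:ℝ)/2)) →
      (c₂ * C₃⁻¹ * lam ^ (-(1:ℝ)/2) * Real.log lam ^ ((1:ℝ)/2)
          ≤ ∫ s in (0:ℝ)..L, |φ s|) ∧
      |∫ s in (0:ℝ)..L, φ s|
          < c₂ * C₃⁻¹ * lam ^ (-(1:ℝ)/2) * Real.log lam ^ ((1:ℝ)/2) ∧
      ∃ p ∈ Set.Icc (0:ℝ) L, ∃ q ∈ Set.Icc (0:ℝ) L, 0 < φ p ∧ φ q < 0 :=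
  stmt_5_general C₁ c₂ C₃ hc₂ hC₃
end

section
/- Let f: ℂ ⊇ D → ℂ be holomorphic and not identically zero on the unit disc, with f extending continuously to the closed disc, and suppose sup_{|z|≤1} |f(z)| ≤ 2^N · sup_{|z| ≤ 1/2} |f(z)|. Then the number of zeros of f in the disc of radius 1/2, counted with multiplicity, is at most C₀·N for an absolute constant C₀. -/
/-!
Divide out the zeros `a₁, …, aₙ` of `f` in the disc of radius `1/2` (with multiplicity):
`f = P g` with `P = ∏ (z - aᵢ)`, where `g` is obtained by iterating `dslope`, which keeps it
continuous up to the unit circle. Replacing `P` by `Q = ∏ (1 - āᵢ z)` gives `F = Q g`, which has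
the same modulus as `f` on the unit circle, so `|F| ≤ sup_{|z|≤1} |f|` by the maximum principle.
On `|z| ≤ 1/2` each Blaschke factor satisfies `|z - a| ≤ (4/5) |1 - ā z|`, hence
`sup_{|z|≤1/2} |f| ≤ (4/5)ⁿ sup_{|z|≤1} |f|`. Against the doubling bound this gives
`(5/4)ⁿ ≤ 2^N`, i.e. `n ≤ 4 N`.
-/

open Metric Set Function Filter Topology ComplexConjugate

-- `sInf ∅ = 0`: a function all of whose derivatives vanish at `z` gets order `0` there.
noncomputable def vanishingOrder (f : ℂ → ℂ) (z : ℂ) : ℕ :=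
  sInf {k : ℕ | iteratedDeriv k f z ≠ 0}

section IteratedDSlope

variable {𝕜 E : Type*} [NontriviallyNormedField 𝕜] [NormedAddCommGroup E] [NormedSpace 𝕜 E]
  {f : 𝕜 → E} {a : 𝕜}

theorem AnalyticAt.analyticOrderAt_eq_dslope_add_one (hf : AnalyticAt 𝕜 f a) (ha : f a = 0) :
    analyticOrderAt f a = analyticOrderAt (dslope f a) a + 1 := by
  obtain ⟨p, hp⟩ := hf
  have hfactor : f = (· - a) • dslope f a := funext fun x ↦ (sub_smul_dslope_of_zero ha x).symm
  conv_lhs => rw [hfactor]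
  rw [analyticOrderAt_smul (by fun_prop) hp.has_fpower_series_dslope_fslope.analyticAt,
    analyticOrderAt_id_sub_const_self, add_comm]

theorem AnalyticAt.iterate_dslope_apply_self_eq_zero (hf : AnalyticAt 𝕜 f a) {m : ℕ}
    (hm : (m : ℕ∞) ≤ analyticOrderAt f a) : ∀ k < m, (swap dslope a)^[k] f a = 0 := by
  induction m generalizing f with
  | zero => simp
  | succ m ih =>
    have ha : f a = 0 := apply_eq_zero_of_analyticOrderAt_ne_zero <|
      (lt_of_lt_of_le (by exact_mod_cast m.succ_pos) hm).ne'
    obtain ⟨p, hp⟩ := hf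
    rw [hp.analyticAt.analyticOrderAt_eq_dslope_add_one ha, Nat.cast_succ,
      ENat.add_le_add_iff_right ENat.one_ne_top] at hm
    rintro (_ | k) hk
    · exact ha
    · exact ih hp.has_fpower_series_dslope_fslope.analyticAt hm k (by omega)

end IteratedDSlope

section Factorization

variable {U K : Set ℂ} {f : ℂ → ℂ} {a : ℂ}

theorem differentiableOn_and_continuousOn_iterate_dslope (hU : U ∈ 𝓝 a) (hUK : U ⊆ K)
    (hf : DifferentiableOn ℂ f U) (hfc : ContinuousOn f K) (n : ℕ) :
    DifferentiableOn ℂ ((swap dslope a)^[n] f) U ∧ ContinuousOn ((swap dslope a)^[n] f) K := by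
  induction n generalizing f with
  | zero => exact ⟨hf, hfc⟩
  | succ n ih =>
    rw [iterate_succ_apply]
    exact ih ((Complex.differentiableOn_dslope hU).2 hf)
      ((continuousOn_dslope (mem_of_superset hU hUK)).2 ⟨hfc, hf.differentiableAt hU⟩)

theorem exists_eq_prod_pow_analyticOrderNatAt_mul (hU : IsOpen U) (hUK : U ⊆ K)
    (hf : DifferentiableOn ℂ f U) (hfc : ContinuousOn f K) (T : Finset ℂ) (hT : ↑T ⊆ U) :
    ∃ g : ℂ → ℂ, DifferentiableOn ℂ g U ∧ ContinuousOn g K ∧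
      ∀ x, f x = (∏ z ∈ T, (x - z) ^ analyticOrderNatAt f z) * g x := by
  classical
  induction T using Finset.induction_on with
  | empty => exact ⟨f, hf, hfc, by simp⟩
  | @insert a T haT ih =>
    rw [Finset.coe_insert, insert_subset_iff] at hT
    obtain ⟨g, hg, hgc, hfg⟩ := ih hT.2
    set u : ℂ → ℂ := fun x ↦ ∏ z ∈ T, (x - z) ^ analyticOrderNatAt f z
    have hua : u a ≠ 0 := Finset.prod_ne_zero_iff.2 fun z hz ↦
      pow_ne_zero _ (sub_ne_zero.2 (ne_of_mem_of_not_mem hz haT).symm)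
    have hga : AnalyticAt ℂ g a := hg.analyticAt (hU.mem_nhds hT.1)
    have hord : analyticOrderAt f a = analyticOrderAt g a := by
      rw [show f = u * g from funext hfg, analyticOrderAt_mul (by fun_prop) hga,
        analyticOrderAt_eq_zero.2 (.inr hua), zero_add]
    have hvanish := hga.iterate_dslope_apply_self_eq_zero (m := analyticOrderNatAt f a)
      ((ENat.natCast_toNat_le_self _).trans hord.le)
    obtain ⟨hg', hgc'⟩ := differentiableOn_and_continuousOn_iterate_dslope (hU.mem_nhds hT.1)
      hUK hg hgc (analyticOrderNatAt f a)
    refine ⟨_, hg', hgc', fun x ↦ ?_⟩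
    rw [hfg, ← pow_sub_smul_iterate_dslope_of_zero _ hvanish x, Finset.prod_insert haT,
      smul_eq_mul]
    ring

end Factorization

theorem AnalyticOnNhd.finite_zeros_of_isCompact {𝕜 E : Type*} [NontriviallyNormedField 𝕜]
    [NormedAddCommGroup E] [NormedSpace 𝕜 E] {f : 𝕜 → E} {U K : Set 𝕜}
    (hf : AnalyticOnNhd 𝕜 f U) (hU : IsConnected U) (hK : IsCompact K) (hKU : K ⊆ U)
    {x : 𝕜} (hx : x ∈ U) (hfx : f x ≠ 0) : {z ∈ K | f z = 0}.Finite := by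
  have hcod := codiscreteWithin_mono hKU (hf.preimage_zero_mem_codiscreteWithin hfx hx hU)
  convert hK.finite_sdiff_of_mem_codiscreteWithin hcod using 1
  ext z
  simp

theorem vanishingOrder_eq_analyticOrderNatAt {f : ℂ → ℂ} {z : ℂ} (hf : AnalyticAt ℂ f z)
    (hfin : analyticOrderAt f z ≠ ⊤) : vanishingOrder f z = analyticOrderNatAt f z := by
  obtain ⟨hlt, hne⟩ := (analyticOrderAt_eq_nat_iff_iteratedDeriv_eq_zero hf).1
    (Nat.cast_analyticOrderNatAt hfin).symm
  exact le_antisymm (Nat.sInf_le hne) (le_csInf ⟨_, hne⟩ fun k hk ↦ not_lt.1 fun h ↦ hk (hlt k h))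

section PseudoHyperbolic

theorem Complex.normSq_one_sub_conj_mul_sub_normSq_sub (z w : ℂ) :
    normSq (1 - conj w * z) - normSq (z - w) = (1 - normSq z) * (1 - normSq w) := by
  simp only [normSq_apply, sub_re, sub_im, one_re, one_im, mul_re, mul_im, conj_re, conj_im]
  ring

theorem Complex.norm_one_sub_conj_mul_eq_norm_sub {z : ℂ} (hz : ‖z‖ = 1) (w : ℂ) :
    ‖1 - conj w * z‖ = ‖z - w‖ := by
  have key := normSq_one_sub_conj_mul_sub_normSq_sub z w
  rw [normSq_eq_norm_sq z, hz] at key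
  rw [← sq_eq_sq₀ (norm_nonneg _) (norm_nonneg _), ← normSq_eq_norm_sq, ← normSq_eq_norm_sq]
  linarith

theorem Complex.norm_sub_le_four_fifths_mul {z w : ℂ} (hz : ‖z‖ ≤ 1 / 2) (hw : ‖w‖ ≤ 1 / 2) :
    ‖z - w‖ ≤ 4 / 5 * ‖1 - conj w * z‖ := by
  have key := normSq_one_sub_conj_mul_sub_normSq_sub z w
  simp only [normSq_eq_norm_sq] at key
  have hbound : ‖1 - conj w * z‖ ≤ 5 / 4 := calc
    ‖1 - conj w * z‖ ≤ 1 + ‖w‖ * ‖z‖ := by simpa using norm_sub_le (1 : ℂ) (conj w * z)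
    _ ≤ 5 / 4 := by nlinarith [norm_nonneg z, norm_nonneg w]
  have hz2 : 3 / 4 ≤ 1 - ‖z‖ ^ 2 := by nlinarith [norm_nonneg z]
  have hw2 : 3 / 4 ≤ 1 - ‖w‖ ^ 2 := by nlinarith [norm_nonneg w]
  have hprod : 9 / 16 ≤ (1 - ‖z‖ ^ 2) * (1 - ‖w‖ ^ 2) := by nlinarith
  nlinarith [norm_nonneg (z - w), norm_nonneg (1 - conj w * z)]

end PseudoHyperbolic

section Blaschke

variable {T : Finset ℂ} (m : ℂ → ℕ)

theorem norm_prod_one_sub_conj_mul_pow_eq {x : ℂ} (hx : ‖x‖ = 1) :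
    ‖∏ a ∈ T, (1 - conj a * x) ^ m a‖ = ‖∏ a ∈ T, (x - a) ^ m a‖ := by
  simp only [norm_prod, norm_pow, Complex.norm_one_sub_conj_mul_eq_norm_sub hx]

theorem norm_prod_sub_pow_le (hT : ∀ a ∈ T, ‖a‖ ≤ 1 / 2) {x : ℂ} (hx : ‖x‖ ≤ 1 / 2) :
    ‖∏ a ∈ T, (x - a) ^ m a‖ ≤ (4 / 5) ^ (∑ a ∈ T, m a) * ‖∏ a ∈ T, (1 - conj a * x) ^ m a‖ := by
  simp only [norm_prod, norm_pow, ← Finset.prod_pow_eq_pow_sum, ← Finset.prod_mul_distrib,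
    ← mul_pow]
  exact Finset.prod_le_prod (fun _ _ ↦ by positivity) fun a ha ↦
    pow_le_pow_left₀ (norm_nonneg _) (Complex.norm_sub_le_four_fifths_mul hx (hT a ha)) _

end Blaschke

theorem IsCompact.norm_le_sSup_image_norm {α E : Type*} [TopologicalSpace α]
    [SeminormedAddGroup E] {f : α → E} {s : Set α} (hs : IsCompact s) (hf : ContinuousOn f s)
    {x : α} (hx : x ∈ s) :
    ‖f x‖ ≤ sSup ((‖f ·‖) '' s) :=
  le_csSup (hs.image_of_continuousOn hf.norm).bddAbove (mem_image_of_mem _ hx)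

theorem sSup_norm_closedBall_half_le_of_eq_prod_mul {f g : ℂ → ℂ} {T : Finset ℂ} (m : ℂ → ℕ)
    (hT : ∀ a ∈ T, ‖a‖ ≤ 1 / 2) (hg : DifferentiableOn ℂ g (ball 0 1))
    (hgc : ContinuousOn g (closedBall 0 1)) (hfg : ∀ x, f x = (∏ a ∈ T, (x - a) ^ m a) * g x) :
    sSup ((‖f ·‖) '' closedBall 0 (1 / 2)) ≤
      (4 / 5) ^ (∑ a ∈ T, m a) * sSup ((‖f ·‖) '' closedBall 0 1) := by
  set A := sSup ((‖f ·‖) '' closedBall (0 : ℂ) 1)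
  have hfc : ContinuousOn f (closedBall 0 1) :=
    ((by fun_prop : Continuous fun x : ℂ ↦ ∏ a ∈ T, (x - a) ^ m a).continuousOn.mul hgc).congr
      fun x _ ↦ hfg x
  -- `F` has the modulus of `f` on the unit circle but is larger inside the disc of radius `1/2`.
  set F : ℂ → ℂ := fun x ↦ (∏ a ∈ T, (1 - conj a * x) ^ m a) * g x
  have hF : DiffContOnCl ℂ F (ball 0 1) := by
    refine ⟨(by fun_prop : Differentiable ℂ fun x : ℂ ↦ ∏ a ∈ T, (1 - conj a * x) ^ m a)
      |>.differentiableOn.mul hg, ?_⟩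
    rw [closure_ball 0 one_ne_zero]
    exact (by fun_prop : Continuous fun x : ℂ ↦ ∏ a ∈ T, (1 - conj a * x) ^ m a).continuousOn.mul
      hgc
  have hFA : ∀ z ∈ closedBall (0 : ℂ) 1, ‖F z‖ ≤ A := by
    intro z hz
    refine Complex.norm_le_of_forall_mem_frontier_norm_le isBounded_ball hF (fun x hx ↦ ?_)
      (by rwa [closure_ball 0 one_ne_zero])
    rw [frontier_ball 0 one_ne_zero, mem_sphere_zero_iff_norm] at hx
    rw [norm_mul, norm_prod_one_sub_conj_mul_pow_eq m hx, ← norm_mul, ← hfg]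
    exact (isCompact_closedBall 0 1).norm_le_sSup_image_norm hfc (by simp [hx])
  refine csSup_le ((nonempty_closedBall.2 (by norm_num)).image _) ?_
  rintro _ ⟨z, hz, rfl⟩
  rw [mem_closedBall_zero_iff] at hz
  calc ‖f z‖ = ‖∏ a ∈ T, (z - a) ^ m a‖ * ‖g z‖ := by rw [hfg, norm_mul]
    _ ≤ (4 / 5) ^ (∑ a ∈ T, m a) * ‖∏ a ∈ T, (1 - conj a * z) ^ m a‖ * ‖g z‖ := by
      gcongr; exact norm_prod_sub_pow_le m hT hz
    _ = (4 / 5) ^ (∑ a ∈ T, m a) * ‖F z‖ := by rw [norm_mul, mul_assoc]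
    _ ≤ (4 / 5) ^ (∑ a ∈ T, m a) * A := by
      gcongr
      exact hFA z (closedBall_subset_closedBall (by norm_num) (mem_closedBall_zero_iff.2 hz))

theorem natCast_le_four_mul_of_one_le_pow_mul_rpow {n : ℕ} {N : ℝ}
    (h : 1 ≤ (4 / 5 : ℝ) ^ n * 2 ^ N) : (n : ℝ) ≤ 4 * N := by
  have h45 : Real.log (4 / 5) = -Real.log (5 / 4) := by rw [← Real.log_inv]; norm_num
  have hlog := Real.log_le_log one_pos h
  rw [Real.log_one, Real.log_mul (by positivity) (by positivity), Real.log_pow,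
    Real.log_rpow two_pos, h45] at hlog
  have h2 : Real.log 2 ≤ Real.log ((5 / 4) ^ 4) := Real.log_le_log two_pos (by norm_num)
  rw [Real.log_pow, Nat.cast_ofNat] at h2
  have hpos : 0 < Real.log (5 / 4) := Real.log_pos (by norm_num)
  have hN : 0 ≤ N := by nlinarith [Real.log_pos one_lt_two, n.cast_nonneg (α := ℝ)]
  nlinarith

/-- Lin's lemma: a holomorphic function on the unit disc, continuous up to the
boundary, not identically zero, satisfying the doubling bound
`sup_{|z|≤1}|f| ≤ 2^N · sup_{|z|≤1/2}|f|` has at most `C₀·N` zeros (with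
multiplicity) in the disc of radius `1/2`, for an absolute constant `C₀`. -/
theorem stmt_15 :
    ∃ C₀ : ℝ, 0 < C₀ ∧
      ∀ (N : ℝ), 0 ≤ N → ∀ f : ℂ → ℂ,
        DifferentiableOn ℂ f (Metric.ball (0 : ℂ) 1) →
        ContinuousOn f (Metric.closedBall (0 : ℂ) 1) →
        (∃ z ∈ Metric.ball (0 : ℂ) 1, f z ≠ 0) →
        sSup ((fun z => ‖f z‖) '' Metric.closedBall (0 : ℂ) 1) ≤
          2 ^ N * sSup ((fun z => ‖f z‖) '' Metric.closedBall (0 : ℂ) (1/2)) →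
        {z ∈ Metric.closedBall (0 : ℂ) (1/2) | f z = 0}.Finite ∧
          ((∑ᶠ z ∈ {z ∈ Metric.closedBall (0 : ℂ) (1/2) | f z = 0},
              vanishingOrder f z : ℕ) : ℝ) ≤ C₀ * N := by
  refine ⟨4, by norm_num, fun N _ f hd hc ⟨z₀, hz₀, hfz₀⟩ hdbl ↦ ?_⟩
  have hKU : closedBall (0 : ℂ) (1 / 2) ⊆ ball 0 1 := closedBall_subset_ball (by norm_num)
  have han : AnalyticOnNhd ℂ f (ball 0 1) := hd.analyticOnNhd isOpen_ball
  have hfin := han.finite_zeros_of_isCompact (isConnected_ball one_pos) (isCompact_closedBall _ _)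
    hKU hz₀ hfz₀
  refine ⟨hfin, ?_⟩
  set T := hfin.toFinset
  have hTK : ∀ a ∈ T, a ∈ closedBall (0 : ℂ) (1 / 2) := fun a ha ↦ (hfin.mem_toFinset.1 ha).1
  obtain ⟨g, hg, hgc, hfg⟩ := exists_eq_prod_pow_analyticOrderNatAt_mul isOpen_ball
    ball_subset_closedBall hd hc T fun a ha ↦ hKU (hTK a ha)
  have hsum : ∑ᶠ z ∈ {z ∈ closedBall (0 : ℂ) (1 / 2) | f z = 0}, vanishingOrder f z =
      ∑ a ∈ T, analyticOrderNatAt f a := by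
    rw [finsum_mem_eq_finite_toFinset_sum _ hfin]
    refine Finset.sum_congr rfl fun a ha ↦ vanishingOrder_eq_analyticOrderNatAt
      (han a (hKU (hTK a ha))) ?_
    refine han.analyticOrderAt_ne_top_of_isPreconnected (convex_ball 0 1).isPreconnected hz₀
      (hKU (hTK a ha)) ?_
    simp [analyticOrderAt_eq_zero.2 (.inr hfz₀)]
  have hM := sSup_norm_closedBall_half_le_of_eq_prod_mul _
    (fun a ha ↦ mem_closedBall_zero_iff.1 (hTK a ha)) hg hgc hfg
  have hMpos : 0 < sSup ((‖f ·‖) '' closedBall (0 : ℂ) (1 / 2)) := by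
    have := (norm_pos_iff.2 hfz₀).trans_le <|
      ((isCompact_closedBall 0 1).norm_le_sSup_image_norm hc (ball_subset_closedBall hz₀)).trans
        hdbl
    exact pos_of_mul_pos_right this (by positivity)
  rw [hsum]
  refine natCast_le_four_mul_of_one_le_pow_mul_rpow (le_of_mul_le_mul_right ?_ hMpos)
  calc 1 * _ ≤ _ := (one_mul _).le.trans hM
    _ ≤ _ := by rw [mul_assoc]; gcongr
end
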